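/- arXiv:1611.02235 — 4 statements merged into one kernel-verified Lean document; each statement's English description precedes it below -/
import Mathlib

section
/- For every k ≥ 1, if G_0,…,G_{k-1} are nowhere zero then the operator identities (T − a_k·)∘L_{-(k-1)} = L_{-k}∘(T − a_{k-1}·) and (T − a_k·)∘(G_{k-1}·) = (T(G_{k-1})·)∘(T − a_{k-1}·) hold on 𝔉. -/
/-!
Semi-discrete setting: the space `𝔉` is modelled by `SDF = ℤ → ℝ → ℝ`
(functions `φ(i,x)`, smooth in `x` for each `i`), with the shift `T`,
the inverse shift `Tinv`, the `k`-fold shift `Tz k`, and the derivative `D`.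
For `g : SDF`, pointwise multiplication `g * φ` models the operator `g·`.
-/

/-- The underlying function space of `𝔉`. -/
abbrev SDF : Type := ℤ → ℝ → ℝ

namespace SDF

noncomputable section

/-- The shift operator `T(φ)(i,x) = φ(i+1,x)`. -/
def T (φ : SDF) : SDF := fun i x => φ (i + 1) x

/-- The inverse shift operator `T⁻¹(φ)(i,x) = φ(i-1,x)`. -/
def Tinv (φ : SDF) : SDF := fun i x => φ (i - 1) x

/-- The `k`-fold shift. -/
def Tz (k : ℤ) (φ : SDF) : SDF := fun i x => φ (i + k) x

/-- The total derivative `D(φ)(i,x) = ∂φ/∂x (i,x)`. -/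
def D (φ : SDF) : SDF := fun i x => deriv (φ i) x

/-- Membership in `𝔉`: infinitely differentiable in `x` for every `i`. -/
def Smooth (φ : SDF) : Prop := ∀ i : ℤ, ContDiff ℝ (⊤ : ℕ∞) (φ i)

/-- A function that is nowhere zero. -/
def NowhereZero (φ : SDF) : Prop := ∀ i x, φ i x ≠ 0

/-- The linearization operator `L = T∘D − a·D − b·T − c·`. -/
def L (a b c : SDF) (φ : SDF) : SDF := T (D φ) - a * D φ - b * T φ - c * φ

/-- The pair `(a_k, G_k)` of the Laplace i-transformations:
`a_0 = a`, `G_0 = c + a·b − D(a)`,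
`a_k = a_{k-1}·T(G_{k-1})/G_{k-1}`,
`G_k = T(G_{k-1}) − D(a_k) + a_k·(T^k(b) − T^{k-1}(b))`. -/
def aG (a b c : SDF) : ℕ → SDF × SDF
  | 0 => (a, c + a * b - D a)
  | k + 1 =>
      let ak := (aG a b c k).1 * T (aG a b c k).2 / (aG a b c k).2
      (ak, T (aG a b c k).2 - D ak + ak * (Tz ((k : ℤ) + 1) b - Tz (k : ℤ) b))

/-- The function `a_k`. -/
def ai (a b c : SDF) (k : ℕ) : SDF := (aG a b c k).1

/-- The Laplace i-invariant `G_k`. -/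
def Gi (a b c : SDF) (k : ℕ) : SDF := (aG a b c k).2

/-- The pair `(b_k, H_k)` of the Laplace x-transformations:
`b_0 = b`, `H_0 = c + a·T⁻¹(b)`,
`b_k = T⁻¹(b_{k-1}) + D(H_{k-1})/H_{k-1}`,
`H_k = H_{k-1} + a·(T⁻¹(b_k) − b_k) + D(a)`. -/
def bH (a b c : SDF) : ℕ → SDF × SDF
  | 0 => (b, c + a * Tinv b)
  | k + 1 =>
      let bk := Tinv (bH a b c k).1 + D (bH a b c k).2 / (bH a b c k).2
      (bk, (bH a b c k).2 + a * (Tinv bk - bk) + D a)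

/-- The function `b_k`. -/
def bx (a b c : SDF) (k : ℕ) : SDF := (bH a b c k).1

/-- The Laplace x-invariant `H_k`. -/
def Hx (a b c : SDF) (k : ℕ) : SDF := (bH a b c k).2

/-- The operator `L_{-k}`: `L_0 = L` and
`L_{-k} = (D − T^k(b)·)∘(T − a_k·) − G_k·` for `k ≥ 1`. -/
def Lneg (a b c : SDF) : ℕ → SDF → SDF
  | 0, φ => L a b c φ
  | k + 1, φ =>
      D (T φ - ai a b c (k + 1) * φ)
        - Tz ((k : ℤ) + 1) b * (T φ - ai a b c (k + 1) * φ)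
        - Gi a b c (k + 1) * φ

/-- The operator `L_k`, `k ≥ 1`: `L_0 = L` and
`L_k = (T − a·)∘(D − T⁻¹(b_k)·) − H_k·` for `k ≥ 1`. -/
def Lpos (a b c : SDF) : ℕ → SDF → SDF
  | 0, φ => L a b c φ
  | k + 1, φ =>
      T (D φ - Tinv (bx a b c (k + 1)) * φ)
        - a * (D φ - Tinv (bx a b c (k + 1)) * φ)
        - Hx a b c (k + 1) * φ

/-- `Cc (k+1)` is the operator `C_k = (D − T⁻¹(b_k)·)∘C_{k-1}`; `Cc 0 = id` is `C_{-1}`. -/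
def Cc (a b c : SDF) : ℕ → SDF → SDF
  | 0, φ => φ
  | k + 1, φ => D (Cc a b c k φ) - Tinv (bx a b c k) * Cc a b c k φ

/-- `Cbar k` is the operator `C̄_k`: `C̄_0 = id`, `C̄_k = (D − b_k·)∘C̄_{k-1}`. -/
def Cbar (a b c : SDF) : ℕ → SDF → SDF
  | 0, φ => φ
  | k + 1, φ => D (Cbar a b c k φ) - bx a b c (k + 1) * Cbar a b c k φ

/-- `Aa (k+1)` is the operator `A_k = (T − a_k·)∘A_{k-1}`; `Aa 0 = id` is `A_{-1}`. -/
def Aa (a b c : SDF) : ℕ → SDF → SDF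
  | 0, φ => φ
  | k + 1, φ => T (Aa a b c k φ) - ai a b c k * Aa a b c k φ

/-- `Abar k` is the operator `Ā_k`: `Ā_0 = id`, `Ā_k = (T − a_k·)∘Ā_{k-1}`. -/
def Abar (a b c : SDF) : ℕ → SDF → SDF
  | 0, φ => φ
  | k + 1, φ => T (Abar a b c k φ) - ai a b c (k + 1) * Abar a b c k φ

end

section Aux

lemma T_apply (f : SDF) (i : ℤ) (x : ℝ) : T f i x = f (i + 1) x := rfl

lemma smooth_add {f g : SDF} (hf : Smooth f) (hg : Smooth g) : Smooth (f + g) :=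
  fun i => (hf i).add (hg i)

lemma smooth_sub {f g : SDF} (hf : Smooth f) (hg : Smooth g) : Smooth (f - g) :=
  fun i => (hf i).sub (hg i)

lemma smooth_mul {f g : SDF} (hf : Smooth f) (hg : Smooth g) : Smooth (f * g) :=
  fun i => (hf i).mul (hg i)

lemma smooth_T {f : SDF} (hf : Smooth f) : Smooth (T f) := fun i => hf (i + 1)

lemma smooth_Tz (k : ℤ) {f : SDF} (hf : Smooth f) : Smooth (Tz k f) := fun i => hf (i + k)

lemma smooth_D {f : SDF} (hf : Smooth f) : Smooth (D f) := by
  intro i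
  have h := (contDiff_succ_iff_deriv (n := (⊤ : ℕ∞)) (f := f i)).mp (by simpa using hf i)
  exact h.2.2

lemma smooth_div {f g : SDF} (hf : Smooth f) (hg : Smooth g) (h0 : NowhereZero g) :
    Smooth (f / g) := fun i => (hf i).div (hg i) (h0 i)

lemma ai_succ (a b c : SDF) (k : ℕ) :
    ai a b c (k + 1) = ai a b c k * T (Gi a b c k) / Gi a b c k := rfl

lemma Gi_succ (a b c : SDF) (k : ℕ) :
    Gi a b c (k + 1) = T (Gi a b c k) - D (ai a b c (k + 1))
      + ai a b c (k + 1) * (Tz ((k : ℤ) + 1) b - Tz (k : ℤ) b) := rfl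

lemma smooth_aiGi (a b c : SDF) (ha : Smooth a) (hb : Smooth b) (hc : Smooth c) :
    ∀ k : ℕ, (∀ m, m < k → NowhereZero (Gi a b c m)) →
      Smooth (ai a b c k) ∧ Smooth (Gi a b c k)
  | 0, _ => ⟨ha, smooth_sub (smooth_add hc (smooth_mul ha hb)) (smooth_D ha)⟩
  | (k + 1), h => by
    obtain ⟨h1, h2⟩ := smooth_aiGi a b c ha hb hc k fun m hm => h m (hm.trans (Nat.lt_succ_self k))
    have hz := h k (Nat.lt_succ_self k)
    have hak : Smooth (ai a b c (k + 1)) := by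
      rw [ai_succ]
      exact smooth_div (smooth_mul h1 (smooth_T h2)) h2 hz
    refine ⟨hak, ?_⟩
    rw [Gi_succ]
    exact smooth_add (smooth_sub (smooth_T h2) (smooth_D hak))
      (smooth_mul hak (smooth_sub (smooth_Tz _ hb) (smooth_Tz _ hb)))

lemma ai_mul_Gi (a b c : SDF) (k : ℕ) (hz : NowhereZero (Gi a b c k)) (i : ℤ) (x : ℝ) :
    ai a b c (k + 1) i x * Gi a b c k i x = ai a b c k i x * Gi a b c k (i + 1) x := by
  have h : ai a b c (k + 1) i x
      = ai a b c k i x * Gi a b c k (i + 1) x / Gi a b c k i x := rfl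
  rw [h, div_mul_cancel₀ _ (hz i x)]

lemma Gi_succ_apply (a b c : SDF) (k : ℕ) (i : ℤ) (x : ℝ) :
    Gi a b c (k + 1) i x = Gi a b c k (i + 1) x - D (ai a b c (k + 1)) i x
      + ai a b c (k + 1) i x * (b (i + ((k : ℤ) + 1)) x - b (i + (k : ℤ)) x) := rfl

lemma Lneg_apply (a b c : SDF) (j : ℕ) (hA : Smooth (ai a b c j)) (φ : SDF) (hφ : Smooth φ)
    (i : ℤ) (x : ℝ) :
    Lneg a b c j φ i x =
      D φ (i + 1) x - D (ai a b c j) i x * φ i x - ai a b c j i x * D φ i x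
        - b (i + (j : ℤ)) x * (φ (i + 1) x - ai a b c j i x * φ i x)
        - Gi a b c j i x * φ i x := by
  cases j with
  | zero =>
      show deriv (φ (i + 1)) x - a i x * deriv (φ i) x - b i x * φ (i + 1) x - c i x * φ i x
        = deriv (φ (i + 1)) x - deriv (a i) x * φ i x - a i x * deriv (φ i) x
          - b (i + ((0 : ℕ) : ℤ)) x * (φ (i + 1) x - a i x * φ i x)
          - (c i x + a i x * b i x - deriv (a i) x) * φ i x
      rw [show i + ((0 : ℕ) : ℤ) = i by simp]
      ring
  | succ n =>
      have hd : D (T φ - ai a b c (n + 1) * φ) i x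
          = D φ (i + 1) x - (D (ai a b c (n + 1)) i x * φ i x
              + ai a b c (n + 1) i x * D φ i x) := by
        have h1 : HasDerivAt (φ (i + 1)) (D φ (i + 1) x) x :=
          ((hφ (i + 1)).differentiable (by simp) x).hasDerivAt
        have h2 : HasDerivAt (ai a b c (n + 1) i) (D (ai a b c (n + 1)) i x) x :=
          ((hA i).differentiable (by simp) x).hasDerivAt
        have h3 : HasDerivAt (φ i) (D φ i x) x :=
          ((hφ i).differentiable (by simp) x).hasDerivAt
        exact (h1.sub (h2.mul h3)).deriv
      show D (T φ - ai a b c (n + 1) * φ) i x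
          - (Tz ((n : ℤ) + 1) b * (T φ - ai a b c (n + 1) * φ)) i x
          - (Gi a b c (n + 1) * φ) i x = _
      rw [hd]
      simp only [Tz, Pi.mul_apply, Pi.sub_apply, T_apply]
      rw [show i + ((n : ℤ) + 1) = i + (((n : ℕ) + 1 : ℕ) : ℤ) by push_cast; ring]
      ring

end Aux

/-- For every `k ≥ 1`, if `G_0, …, G_{k-1}` are nowhere zero then the
operator identities `(T − a_k·)∘L_{-(k-1)} = L_{-k}∘(T − a_{k-1}·)` and
`(T − a_k·)∘(G_{k-1}·) = (T(G_{k-1})·)∘(T − a_{k-1}·)` hold on `𝔉`. -/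
theorem statement1 (a b c : SDF) (ha : Smooth a) (hb : Smooth b) (hc : Smooth c)
    (k : ℕ) (hk : 1 ≤ k) (hG : ∀ m, m < k → NowhereZero (Gi a b c m)) :
    ∀ φ : SDF, Smooth φ →
      (T (Lneg a b c (k - 1) φ) - ai a b c k * Lneg a b c (k - 1) φ
          = Lneg a b c k (T φ - ai a b c (k - 1) * φ)) ∧
      (T (Gi a b c (k - 1) * φ) - ai a b c k * (Gi a b c (k - 1) * φ)
          = T (Gi a b c (k - 1)) * (T φ - ai a b c (k - 1) * φ)) := by
  obtain ⟨m, rfl⟩ : ∃ m, k = m + 1 := ⟨k - 1, (Nat.succ_pred_eq_of_pos hk).symm⟩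
  intro φ hφ
  simp only [Nat.add_sub_cancel]
  obtain ⟨hAm, hGm⟩ := smooth_aiGi a b c ha hb hc m fun j hj => hG j (by omega)
  have hzm := hG m (Nat.lt_succ_self m)
  have hAk : Smooth (ai a b c (m + 1)) := by
    rw [ai_succ]; exact smooth_div (smooth_mul hAm (smooth_T hGm)) hGm hzm
  have hψ : Smooth (T φ - ai a b c m * φ) := smooth_sub (smooth_T hφ) (smooth_mul hAm hφ)
  constructor
  · funext i x
    simp only [Pi.sub_apply, Pi.mul_apply, T_apply]
    have hdψ : ∀ j : ℤ, D (T φ - ai a b c m * φ) j x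
        = D φ (j + 1) x - (D (ai a b c m) j x * φ j x + ai a b c m j x * D φ j x) := by
      intro j
      have h1 : HasDerivAt (φ (j + 1)) (D φ (j + 1) x) x :=
        ((hφ (j + 1)).differentiable (by simp) x).hasDerivAt
      have h2 : HasDerivAt (ai a b c m j) (D (ai a b c m) j x) x :=
        ((hAm j).differentiable (by simp) x).hasDerivAt
      have h3 : HasDerivAt (φ j) (D φ j x) x :=
        ((hφ j).differentiable (by simp) x).hasDerivAt
      exact (h1.sub (h2.mul h3)).deriv
    rw [Lneg_apply a b c m hAm φ hφ i x, Lneg_apply a b c m hAm φ hφ (i + 1) x,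
      Lneg_apply a b c (m + 1) hAk _ hψ i x]
    simp only [Pi.sub_apply, Pi.mul_apply, T_apply]
    rw [hdψ i, hdψ (i + 1)]
    have e1 : i + 1 + (m : ℤ) = i + ((m : ℤ) + 1) := by ring
    have e2 : i + (((m : ℕ) + 1 : ℕ) : ℤ) = i + ((m : ℤ) + 1) := by push_cast; ring
    rw [e1, e2]
    have hrelA := ai_mul_Gi a b c m hzm i x
    have hrelG := Gi_succ_apply a b c m i x
    linear_combination (φ (i + 1) x - φ i x * ai a b c m i x) * hrelG + φ i x * hrelA
  · funext i x
    simp only [Pi.sub_apply, Pi.mul_apply, T_apply]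
    have hrelA := ai_mul_Gi a b c m hzm i x
    linear_combination (-(φ i x)) * hrelA


end SDF
end

section
/- Let σ ≥ 0 and α_0,…,α_σ ∈ 𝔉. Suppose that for every infinitely differentiable g : ℝ → ℝ the function S(g)(i,x) = Σ_{k=0}^σ α_k(i,x)·g^{(k)}(x) satisfies L(S(g)) = 0. Then (T − a·)(α_σ) = 0, (T − a·)(α_{k-1}) + L(α_k) = 0 for every 1 ≤ k ≤ σ, and L(α_0) = 0. -/
namespace SDF

private lemma smooth_diff (f : ℝ → ℝ) (h : ContDiff ℝ (⊤ : ℕ∞) f) (k : ℕ) :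
    Differentiable ℝ (iteratedDeriv k f) :=
  h.differentiable_iteratedDeriv k (by exact_mod_cast ENat.coe_lt_top k)

private lemma iter_pow (x₀ : ℝ) (m : ℕ) : ∀ k, iteratedDeriv k (fun x : ℝ => (x - x₀)^m) =
    fun x => (m.descFactorial k : ℝ) * (x - x₀)^(m - k) := by
  intro k
  induction k with
  | zero => simp
  | succ k ih =>
      rw [iteratedDeriv_succ, ih]
      funext x
      have hd : HasDerivAt (fun x : ℝ => (x - x₀)^(m-k))
          (((m - k : ℕ) : ℝ) * (x - x₀)^(m - k - 1)) x := by
        simpa using ((hasDerivAt_id x).sub_const x₀).fun_pow (m - k)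
      rw [(hd.const_mul ((m.descFactorial k : ℕ) : ℝ)).deriv, Nat.descFactorial_succ,
        show m - (k + 1) = m - k - 1 by omega, Nat.cast_mul]
      ring

private lemma extract (n : ℕ) (β : ℕ → ℝ) (x₀ : ℝ)
    (h : ∀ g : ℝ → ℝ, ContDiff ℝ (⊤ : ℕ∞) g →
      ∑ k ∈ Finset.range n, β k * iteratedDeriv k g x₀ = 0) :
    ∀ m, m < n → β m = 0 := by
  intro m hm
  have h2 := h (fun x => (x - x₀)^m) ((contDiff_id.sub contDiff_const).pow m)
  have h3 : ∑ k ∈ Finset.range n, β k * iteratedDeriv k (fun x : ℝ => (x - x₀)^m) x₀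
      = β m * m.factorial := by
    rw [Finset.sum_eq_single m]
    · rw [iter_pow]; simp [Nat.descFactorial_self]
    · intro k _ hkm
      rw [iter_pow]
      rcases lt_or_gt_of_ne hkm with hlt | hgt
      · simp [zero_pow (Nat.sub_ne_zero_of_lt hlt)]
      · simp [Nat.descFactorial_eq_zero_iff_lt.mpr hgt]
    · intro hmn; exact absurd (Finset.mem_range.mpr hm) hmn
  rw [h3] at h2
  rcases mul_eq_zero.mp h2 with h | h
  · exact h
  · exact absurd h (Nat.cast_ne_zero.mpr m.factorial_ne_zero)

/-- Let `σ ≥ 0` and `α_0, …, α_σ ∈ 𝔉`.  If for every smooth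
`g : ℝ → ℝ` the function `S(g)(i,x) = Σ_{k=0}^σ α_k(i,x)·g⁽ᵏ⁾(x)` satisfies
`L(S(g)) = 0`, then `(T − a·)(α_σ) = 0`, `(T − a·)(α_{k-1}) + L(α_k) = 0` for
every `1 ≤ k ≤ σ`, and `L(α_0) = 0`. -/
theorem statement5 (a b c : SDF) (ha : Smooth a) (hb : Smooth b) (hc : Smooth c)
    (σ : ℕ) (α : ℕ → SDF) (hα : ∀ k, k ≤ σ → Smooth (α k))
    (hS : ∀ g : ℝ → ℝ, ContDiff ℝ (⊤ : ℕ∞) g →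
      L a b c (fun i x => ∑ k ∈ Finset.range (σ + 1), α k i x * iteratedDeriv k g x) = 0) :
    (T (α σ) - a * α σ = 0) ∧
    (∀ k, 1 ≤ k → k ≤ σ → (T (α (k - 1)) - a * α (k - 1)) + L a b c (α k) = 0) ∧
    (L a b c (α 0) = 0) := by
  have Leval : ∀ (φ : SDF) (i : ℤ) (x : ℝ), L a b c φ i x
      = deriv (φ (i+1)) x - a i x * deriv (φ i) x - b i x * φ (i+1) x - c i x * φ i x := by
    intro φ i x
    simp [L, T, D, Pi.sub_apply, Pi.mul_apply]
  have hder : ∀ (j : ℤ) (g : ℝ → ℝ), ContDiff ℝ (⊤ : ℕ∞) g → ∀ x : ℝ,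
      deriv (fun x => ∑ k ∈ Finset.range (σ+1), α k j x * iteratedDeriv k g x) x
        = ∑ k ∈ Finset.range (σ+1),
            (deriv (α k j) x * iteratedDeriv k g x + α k j x * iteratedDeriv (k+1) g x) := by
    intro j g hg x
    rw [deriv_fun_sum (u := Finset.range (σ+1)) (A := fun k y => α k j y * iteratedDeriv k g y) (fun k hk =>
      ((hα k (Nat.lt_succ_iff.mp (Finset.mem_range.mp hk)) j).differentiable (by simp) x).mul
        (smooth_diff g hg k x))]
    refine Finset.sum_congr rfl fun k hk => ?_
    rw [deriv_fun_mul ((hα k (Nat.lt_succ_iff.mp (Finset.mem_range.mp hk)) j).differentiable (by simp) x)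
      (smooth_diff g hg k x), ← iteratedDeriv_succ]
  have hexp : ∀ (g : ℝ → ℝ) (hg : ContDiff ℝ (⊤ : ℕ∞) g) (i : ℤ) (x : ℝ),
      L a b c (fun i x => ∑ k ∈ Finset.range (σ + 1), α k i x * iteratedDeriv k g x) i x
        = ∑ k ∈ Finset.range (σ+1),
            (L a b c (α k) i x * iteratedDeriv k g x
              + (α k (i+1) x - a i x * α k i x) * iteratedDeriv (k+1) g x) := by
    intro g hg i x
    simp only [Leval]
    rw [hder (i+1) g hg x, hder i g hg x, Finset.mul_sum, Finset.mul_sum, Finset.mul_sum,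
      ← Finset.sum_sub_distrib, ← Finset.sum_sub_distrib, ← Finset.sum_sub_distrib]
    exact Finset.sum_congr rfl fun k _ => by ring
  set β : ℤ → ℝ → ℕ → ℝ := fun i x k =>
    (if k ≤ σ then L a b c (α k) i x else 0)
      + (if k = 0 then 0 else α (k-1) (i+1) x - a i x * α (k-1) i x) with hβ
  have key : ∀ (i : ℤ) (x : ℝ) (m : ℕ), m < σ + 2 → β i x m = 0 := by
    intro i x
    refine extract (σ+2) (β i x) x ?_
    intro g hg
    have e1 : ∑ k ∈ Finset.range (σ+2),
        (if k ≤ σ then L a b c (α k) i x else 0) * iteratedDeriv k g x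
        = ∑ k ∈ Finset.range (σ+1), L a b c (α k) i x * iteratedDeriv k g x := by
      rw [Finset.sum_range_succ, if_neg (by omega), zero_mul, add_zero]
      exact Finset.sum_congr rfl fun k hk => by
        rw [if_pos (Nat.lt_succ_iff.mp (Finset.mem_range.mp hk))]
    have e2 : ∑ k ∈ Finset.range (σ+2),
        (if k = 0 then 0 else α (k-1) (i+1) x - a i x * α (k-1) i x) * iteratedDeriv k g x
        = ∑ k ∈ Finset.range (σ+1),
            (α k (i+1) x - a i x * α k i x) * iteratedDeriv (k+1) g x := by
      rw [Finset.sum_range_succ', if_pos rfl, zero_mul, add_zero]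
      exact Finset.sum_congr rfl fun k hk => by
        rw [if_neg (Nat.succ_ne_zero k), Nat.add_sub_cancel]
    have hsplit : ∑ k ∈ Finset.range (σ+2), β i x k * iteratedDeriv k g x
        = (∑ k ∈ Finset.range (σ+2),
            (if k ≤ σ then L a b c (α k) i x else 0) * iteratedDeriv k g x)
          + ∑ k ∈ Finset.range (σ+2),
            (if k = 0 then 0 else α (k-1) (i+1) x - a i x * α (k-1) i x)
              * iteratedDeriv k g x := by
      rw [← Finset.sum_add_distrib]
      refine Finset.sum_congr rfl fun k _ => ?_
      simp only [hβ]; ring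
    rw [hsplit, e1, e2, ← Finset.sum_add_distrib, ← hexp g hg i x, hS g hg]
    rfl
  refine ⟨?_, ?_, ?_⟩
  · funext i x
    have h := key i x (σ+1) (by omega)
    simp only [hβ, if_neg (by omega : ¬ σ + 1 ≤ σ), if_neg (Nat.succ_ne_zero σ),
      Nat.add_sub_cancel, zero_add] at h
    simpa [T, Pi.sub_apply, Pi.mul_apply] using h
  · intro k hk1 hk2
    funext i x
    have h := key i x k (by omega)
    simp only [hβ, if_pos hk2, if_neg (by omega : ¬ k = 0)] at h
    simp only [Pi.add_apply, Pi.sub_apply, Pi.mul_apply, Pi.zero_apply, T]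
    linarith [h]
  · funext i x
    have h := key i x 0 (by omega)
    simp only [hβ, if_pos (Nat.zero_le σ), if_pos rfl, add_zero] at h
    simpa using h

end SDF
end

section
/- Let σ ≥ 0 and α_0,…,α_σ ∈ 𝔉. Suppose that for every infinitely differentiable g : ℝ → ℝ the function S(g)(i,x) = Σ_{k=0}^σ α_k(i,x)·g^{(k)}(x) satisfies L(S(g)) = 0 (i.e. S = Σ α_k·D^k is an x-symmetry driver relation). Then T(α_σ) = a·α_σ, and if moreover the Laplace i-invariants G_0,…,G_σ are all nowhere zero, then α_σ vanishes identically. (Equivalently: if α_σ is not identically zero, then some G_p with p ≤ σ fails to be nowhere-vanishing.) -/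
namespace SDF

section Helpers

open Finset

lemma smooth_deriv {f : ℝ → ℝ} (hf : ContDiff ℝ (⊤ : ℕ∞) f) : ContDiff ℝ (⊤ : ℕ∞) (deriv f) := by
  exact (contDiff_infty_iff_deriv.mp hf).2

lemma smooth_itd {g : ℝ → ℝ} (hg : ContDiff ℝ (⊤ : ℕ∞) g) (k : ℕ) :
    ContDiff ℝ (⊤ : ℕ∞) (iteratedDeriv k g) := by
  induction k with
  | zero => simpa [iteratedDeriv_zero] using hg
  | succ k ih => rw [iteratedDeriv_succ]; exact smooth_deriv ih

lemma itd_monomial (C c : ℝ) (m : ℕ) : ∀ k, iteratedDeriv k (fun y : ℝ => C * (y - c) ^ m)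
    = fun y => (C * m.descFactorial k) * (y - c) ^ (m - k)
  | 0 => by simp
  | k + 1 => by
    rw [iteratedDeriv_succ, itd_monomial C c m k]
    funext y
    have h : HasDerivAt (fun y : ℝ => (C * m.descFactorial k) * (y - c) ^ (m - k))
        ((C * m.descFactorial k) * (((m - k) : ℕ) * (y - c) ^ (m - k - 1) * 1)) y :=
      (((hasDerivAt_id y).sub_const c).pow _).const_mul _
    rw [h.deriv, Nat.descFactorial_succ, ← Nat.sub_sub]
    push_cast
    ring

lemma itd_monomial_self (c : ℝ) (m k : ℕ) :
    iteratedDeriv k (fun y : ℝ => (m.factorial : ℝ)⁻¹ * (y - c) ^ m) c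
      = if k = m then 1 else 0 := by
  rw [itd_monomial]
  rcases lt_trichotomy k m with h | h | h
  · rw [if_neg h.ne]
    simp [zero_pow (Nat.sub_ne_zero_of_lt h)]
  · subst h
    have : ((k.factorial : ℝ)) ≠ 0 := Nat.cast_ne_zero.mpr k.factorial_ne_zero
    simp [Nat.descFactorial_self, inv_mul_cancel₀ this]
  · rw [if_neg h.ne', Nat.descFactorial_eq_zero_iff_lt.mpr h]
    simp

lemma smooth_monomial (c : ℝ) (m : ℕ) :
    ContDiff ℝ (⊤ : ℕ∞) (fun y : ℝ => (m.factorial : ℝ)⁻¹ * (y - c) ^ m) :=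
  contDiff_const.mul ((contDiff_id.sub contDiff_const).pow _)

end Helpers

section Core

lemma diffat {φ : ℝ → ℝ} (h : ContDiff ℝ (⊤ : ℕ∞) φ) (x : ℝ) : DifferentiableAt ℝ φ x :=
  (h.differentiable (by simp)).differentiableAt

lemma deriv_S (α : ℕ → SDF) (N : ℕ) (hα : ∀ k, k < N → Smooth (α k))
    {g : ℝ → ℝ} (hg : ContDiff ℝ (⊤ : ℕ∞) g) (j : ℤ) (x : ℝ) :
    deriv (fun y => ∑ k ∈ Finset.range N, α k j y * iteratedDeriv k g y) x
      = ∑ k ∈ Finset.range N,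
          (deriv (α k j) x * iteratedDeriv k g x + α k j x * iteratedDeriv (k + 1) g x) := by
  rw [deriv_fun_sum (fun k hk =>
    (diffat (hα k (Finset.mem_range.mp hk) j) x).fun_mul (diffat (smooth_itd hg k) x))]
  refine Finset.sum_congr rfl fun k hk => ?_
  rw [deriv_fun_mul (diffat (hα k (Finset.mem_range.mp hk) j) x) (diffat (smooth_itd hg k) x),
    iteratedDeriv_succ]

lemma L_S (a b c : SDF) (σ : ℕ) (α : ℕ → SDF) (hα : ∀ k, k ≤ σ → Smooth (α k))
    {g : ℝ → ℝ} (hg : ContDiff ℝ (⊤ : ℕ∞) g) (i : ℤ) (x : ℝ) :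
    L a b c (fun i x => ∑ k ∈ Finset.range (σ + 1), α k i x * iteratedDeriv k g x) i x
      = ∑ k ∈ Finset.range (σ + 1),
          ((deriv (α k (i + 1)) x - a i x * deriv (α k i) x - b i x * α k (i + 1) x
              - c i x * α k i x) * iteratedDeriv k g x
            + (α k (i + 1) x - a i x * α k i x) * iteratedDeriv (k + 1) g x) := by
  have hα' : ∀ k, k < σ + 1 → Smooth (α k) := fun k hk => hα k (Nat.lt_succ_iff.mp hk)
  simp only [L, T, D, Pi.sub_apply, Pi.mul_apply]
  rw [deriv_S α (σ + 1) hα' hg (i + 1) x, deriv_S α (σ + 1) hα' hg i x,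
    Finset.mul_sum, Finset.mul_sum, Finset.mul_sum, ← Finset.sum_sub_distrib,
    ← Finset.sum_sub_distrib, ← Finset.sum_sub_distrib]
  refine Finset.sum_congr rfl fun k _ => ?_
  ring

end Core


section Extract

lemma part1 (a b c : SDF) (σ : ℕ) (α : ℕ → SDF) (hα : ∀ k, k ≤ σ → Smooth (α k))
    (hS : ∀ g : ℝ → ℝ, ContDiff ℝ (⊤ : ℕ∞) g →
      L a b c (fun i x => ∑ k ∈ Finset.range (σ + 1), α k i x * iteratedDeriv k g x) = 0) :
    T (α σ) = a * α σ := by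
  funext i x
  have hg := smooth_monomial x (σ + 1)
  have h0 := congrFun (congrFun (hS _ hg) i) x
  rw [L_S a b c σ α hα hg i x] at h0
  simp only [itd_monomial_self, Pi.zero_apply] at h0
  have hc : ∀ k ∈ Finset.range (σ + 1),
      ((deriv (α k (i + 1)) x - a i x * deriv (α k i) x - b i x * α k (i + 1) x
          - c i x * α k i x) * (if k = σ + 1 then (1:ℝ) else 0)
        + (α k (i + 1) x - a i x * α k i x) * (if k + 1 = σ + 1 then (1:ℝ) else 0))
      = (if k = σ then α k (i + 1) x - a i x * α k i x else 0) := by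
    intro k hk
    have hk' := Finset.mem_range.mp hk
    rcases eq_or_ne k σ with h | h
    · subst h; simp
    · simp [h, Nat.ne_of_lt hk', fun hh : k + 1 = σ + 1 => h (Nat.succ_injective hh)]
  rw [Finset.sum_congr rfl hc, Finset.sum_ite_eq' (Finset.range (σ + 1)) σ] at h0
  simp only [Finset.mem_range, Nat.lt_succ_self, if_pos] at h0
  show α σ (i + 1) x = a i x * α σ i x
  linarith

lemma coeff2 (a b c : SDF) (σ : ℕ) (α : ℕ → SDF) (hα : ∀ k, k ≤ σ → Smooth (α k))
    (hS : ∀ g : ℝ → ℝ, ContDiff ℝ (⊤ : ℕ∞) g →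
      L a b c (fun i x => ∑ k ∈ Finset.range (σ + 1), α k i x * iteratedDeriv k g x) = 0)
    (i : ℤ) (x : ℝ) :
    (deriv (α σ (i + 1)) x - a i x * deriv (α σ i) x - b i x * α σ (i + 1) x
        - c i x * α σ i x)
      + (∑ k ∈ Finset.range (σ + 1),
          (α k (i + 1) x - a i x * α k i x) * (if k + 1 = σ then (1:ℝ) else 0)) = 0 := by
  have hg := smooth_monomial x σ
  have h0 := congrFun (congrFun (hS _ hg) i) x
  rw [L_S a b c σ α hα hg i x] at h0
  simp only [itd_monomial_self, Pi.zero_apply] at h0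
  rw [Finset.sum_add_distrib] at h0
  have hc : ∀ k ∈ Finset.range (σ + 1),
      ((deriv (α k (i + 1)) x - a i x * deriv (α k i) x - b i x * α k (i + 1) x
          - c i x * α k i x) * (if k = σ then (1:ℝ) else 0))
      = (if k = σ then (deriv (α k (i + 1)) x - a i x * deriv (α k i) x
          - b i x * α k (i + 1) x - c i x * α k i x) else 0) := by
    intro k _
    rcases eq_or_ne k σ with h | h <;> simp [h]
  rw [Finset.sum_congr rfl hc, Finset.sum_ite_eq' (Finset.range (σ + 1)) σ] at h0
  simp only [Finset.mem_range, Nat.lt_succ_self, if_pos] at h0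
  linarith

lemma final (a b c : SDF) (β : SDF) (ha : Smooth a) (hβ : Smooth β)
    (htop : T β = a * β)
    (hE : ∀ i x, deriv (β (i + 1)) x - a i x * deriv (β i) x - b i x * β (i + 1) x
      - c i x * β i x = 0)
    (hG0 : NowhereZero (Gi a b c 0)) : β = 0 := by
  funext i x
  have h1 : β (i + 1) = fun y => a i y * β i y :=
    funext fun y => congrFun (congrFun htop i) y
  have hd : deriv (β (i + 1)) x = deriv (a i) x * β i x + a i x * deriv (β i) x := by
    rw [h1]; exact deriv_mul (diffat (ha i) x) (diffat (hβ i) x)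
  have hE' := hE i x
  rw [hd, congrFun h1 x] at hE'
  have hg : Gi a b c 0 i x ≠ 0 := hG0 i x
  have hgeq : Gi a b c 0 i x = c i x + a i x * b i x - deriv (a i) x := rfl
  have hz : Gi a b c 0 i x * β i x = 0 := by
    rw [hgeq]; linear_combination -hE'
  show β i x = 0
  exact (mul_eq_zero.mp hz).resolve_left hg

end Extract


section Step

lemma Tz_T (m : ℤ) (φ : SDF) : Tz m (T φ) = Tz (m + 1) φ := by
  funext i x
  show φ (i + m + 1) x = φ (i + (m + 1)) x
  rw [add_assoc]

lemma Ginv (a b c : SDF) : ∀ k : ℕ,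
    ai (ai a b c 1) (T b) (T (Gi a b c 0) - ai a b c 1 * b) k = ai a b c (k + 1) ∧
    Gi (ai a b c 1) (T b) (T (Gi a b c 0) - ai a b c 1 * b) k = Gi a b c (k + 1)
  | 0 => by
    refine ⟨rfl, ?_⟩
    funext i x
    have lhs : Gi (ai a b c 1) (T b) (T (Gi a b c 0) - ai a b c 1 * b) 0 i x
        = (Gi a b c 0 (i + 1) x - ai a b c 1 i x * b i x)
          + ai a b c 1 i x * b (i + 1) x - deriv (ai a b c 1 i) x := rfl
    have rhs : Gi a b c 1 i x
        = Gi a b c 0 (i + 1) x - deriv (ai a b c 1 i) x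
          + ai a b c 1 i x * (b (i + (((0:ℕ):ℤ) + 1)) x - b (i + ((0:ℕ):ℤ)) x) := rfl
    rw [lhs, rhs]
    norm_num
    ring
  | k + 1 => by
    obtain ⟨h1, h2⟩ := Ginv a b c k
    have e1 : ai (ai a b c 1) (T b) (T (Gi a b c 0) - ai a b c 1 * b) (k + 1)
        = ai (ai a b c 1) (T b) (T (Gi a b c 0) - ai a b c 1 * b) k
          * T (Gi (ai a b c 1) (T b) (T (Gi a b c 0) - ai a b c 1 * b) k)
          / Gi (ai a b c 1) (T b) (T (Gi a b c 0) - ai a b c 1 * b) k := rfl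
    have ha' : ai (ai a b c 1) (T b) (T (Gi a b c 0) - ai a b c 1 * b) (k + 1)
        = ai a b c (k + 2) := by
      rw [e1, h1, h2]; rfl
    refine ⟨ha', ?_⟩
    have e2 : Gi (ai a b c 1) (T b) (T (Gi a b c 0) - ai a b c 1 * b) (k + 1)
        = T (Gi (ai a b c 1) (T b) (T (Gi a b c 0) - ai a b c 1 * b) k)
          - D (ai (ai a b c 1) (T b) (T (Gi a b c 0) - ai a b c 1 * b) (k + 1))
          + ai (ai a b c 1) (T b) (T (Gi a b c 0) - ai a b c 1 * b) (k + 1)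
            * (Tz ((k : ℤ) + 1) (T b) - Tz (k : ℤ) (T b)) := rfl
    rw [e2, h2, ha', Tz_T, Tz_T]
    rfl

end Step


section StepS

lemma step_hS (a b c : SDF) (n : ℕ) (α : ℕ → SDF) (ha : Smooth a)
    (hα : ∀ k, k ≤ n + 1 → Smooth (α k))
    (hS : ∀ g : ℝ → ℝ, ContDiff ℝ (⊤ : ℕ∞) g →
      L a b c (fun i x => ∑ k ∈ Finset.range (n + 1 + 1), α k i x * iteratedDeriv k g x) = 0)
    (hG0 : NowhereZero (Gi a b c 0))
    (htop : T (α (n + 1)) = a * α (n + 1)) :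
    ∀ g : ℝ → ℝ, ContDiff ℝ (⊤ : ℕ∞) g →
      L (ai a b c 1) (T b) (T (Gi a b c 0) - ai a b c 1 * b)
        (fun i x => ∑ k ∈ Finset.range (n + 1),
          (T (α k) - a * α k) i x * iteratedDeriv k g x) = 0 := by
  intro g hg
  have hLψ := hS g hg
  set ψ : SDF := fun i x => ∑ k ∈ Finset.range (n + 1 + 1), α k i x * iteratedDeriv k g x
    with hψdef
  have hval : ∀ (j : ℤ) (x : ℝ),
      ψ j x = ∑ k ∈ Finset.range (n + 1 + 1), α k j x * iteratedDeriv k g x := fun _ _ => rfl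
  have hψs : ∀ j : ℤ, ContDiff ℝ (⊤ : ℕ∞) (ψ j) := fun j =>
    ContDiff.sum fun k hk =>
      (hα k (Nat.lt_succ_iff.mp (Finset.mem_range.mp hk)) j).mul (smooth_itd hg k)
  have hP : ∀ (j : ℤ) (x : ℝ), deriv (ψ (j + 1)) x
      = a j x * deriv (ψ j) x + b j x * ψ (j + 1) x + c j x * ψ j x := by
    intro j x
    have h0 := congrFun (congrFun hLψ j) x
    simp only [L, T, D, Pi.sub_apply, Pi.mul_apply, Pi.zero_apply] at h0
    linarith
  have hsum : (fun i x => ∑ k ∈ Finset.range (n + 1),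
      (T (α k) - a * α k) i x * iteratedDeriv k g x) = T ψ - a * ψ := by
    funext j x
    show _ = ψ (j + 1) x - a j x * ψ j x
    have hrhs : ψ (j + 1) x - a j x * ψ j x = ∑ k ∈ Finset.range (n + 1 + 1),
        (α k (j + 1) x - a j x * α k j x) * iteratedDeriv k g x := by
      rw [hval, hval, Finset.mul_sum, ← Finset.sum_sub_distrib]
      exact Finset.sum_congr rfl fun k _ => by ring
    have h0 : α (n + 1) (j + 1) x - a j x * α (n + 1) j x = 0 := by
      have := congrFun (congrFun htop j) x
      simp only [T, Pi.mul_apply] at this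
      linarith
    rw [hrhs, Finset.sum_range_succ _ (n + 1), h0, zero_mul, add_zero]
    exact Finset.sum_congr rfl fun k _ => by simp only [T, Pi.sub_apply, Pi.mul_apply]
  rw [hsum]
  funext i x
  show deriv ((T ψ - a * ψ) (i + 1)) x - ai a b c 1 i x * deriv ((T ψ - a * ψ) i) x
      - b (i + 1) x * ((T ψ - a * ψ) (i + 1) x)
      - (Gi a b c 0 (i + 1) x - ai a b c 1 i x * b i x) * ((T ψ - a * ψ) i x) = 0
  have hv : ∀ (j : ℤ) (y : ℝ), (T ψ - a * ψ) j y = ψ (j + 1) y - a j y * ψ j y :=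
    fun _ _ => rfl
  have hdψ1 : ∀ (j : ℤ) (y : ℝ), deriv ((T ψ - a * ψ) j) y
      = deriv (ψ (j + 1)) y - (deriv (a j) y * ψ j y + a j y * deriv (ψ j) y) := by
    intro j y
    have hfun : (T ψ - a * ψ) j = fun z => ψ (j + 1) z - a j z * ψ j z := rfl
    rw [hfun, deriv_fun_sub (diffat (hψs (j + 1)) y)
      ((diffat (ha j) y).fun_mul (diffat (hψs j) y)),
      deriv_fun_mul (diffat (ha j) y) (diffat (hψs j) y)]
  have e0 : Gi a b c 0 i x = c i x + a i x * b i x - deriv (a i) x := rfl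
  have e1 : Gi a b c 0 (i + 1) x
      = c (i + 1) x + a (i + 1) x * b (i + 1) x - deriv (a (i + 1)) x := rfl
  have hA : ai a b c 1 i x * (c i x + a i x * b i x - deriv (a i) x)
      = a i x * (c (i + 1) x + a (i + 1) x * b (i + 1) x - deriv (a (i + 1)) x) := by
    have e : ai a b c 1 i x = a i x * Gi a b c 0 (i + 1) x / Gi a b c 0 i x := rfl
    rw [e, ← e0, ← e1, div_mul_cancel₀ _ (hG0 i x)]
  rw [hdψ1, hdψ1, hv, hv, e1]
  linear_combination hP (i + 1) x - ai a b c 1 i x * hP i x - ψ i x * hA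

end StepS


section Main

lemma main (σ : ℕ) : ∀ (a b c : SDF) (α : ℕ → SDF), Smooth a → Smooth b → Smooth c →
    (∀ k, k ≤ σ → Smooth (α k)) →
    (∀ g : ℝ → ℝ, ContDiff ℝ (⊤ : ℕ∞) g →
      L a b c (fun i x => ∑ k ∈ Finset.range (σ + 1), α k i x * iteratedDeriv k g x) = 0) →
    T (α σ) = a * α σ ∧ ((∀ k, k ≤ σ → NowhereZero (Gi a b c k)) → α σ = 0) := by
  induction σ with
  | zero =>
    intro a b c α ha hb hc hα hS
    have h1 := part1 a b c 0 α hα hS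
    refine ⟨h1, fun hG => ?_⟩
    refine final a b c (α 0) ha (hα 0 le_rfl) h1 (fun i x => ?_) (hG 0 le_rfl)
    have h2 := coeff2 a b c 0 α hα hS i x
    simp only [Nat.zero_add, Finset.range_one, Finset.sum_singleton] at h2
    norm_num at h2
    linarith
  | succ n IH =>
    intro a b c α ha hb hc hα hS
    have h1 := part1 a b c (n + 1) α hα hS
    refine ⟨h1, fun hG => ?_⟩
    have hG0 := hG 0 (Nat.zero_le _)
    have hG0s : Smooth (Gi a b c 0) := by
      intro i
      have e : Gi a b c 0 i = fun x => c i x + a i x * b i x - deriv (a i) x := rfl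
      rw [e]
      exact ((hc i).add ((ha i).mul (hb i))).sub (smooth_deriv (ha i))
    have ha1 : Smooth (ai a b c 1) := by
      intro i
      have e : ai a b c 1 i = fun x => a i x * Gi a b c 0 (i + 1) x / Gi a b c 0 i x := rfl
      rw [e]
      exact ((ha i).mul (hG0s (i + 1))).div (hG0s i) fun x => hG0 i x
    have hb' : Smooth (T b) := fun i => hb (i + 1)
    have hc' : Smooth (T (Gi a b c 0) - ai a b c 1 * b) := by
      intro i
      have e : (T (Gi a b c 0) - ai a b c 1 * b) i
          = fun x => Gi a b c 0 (i + 1) x - ai a b c 1 i x * b i x := rfl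
      rw [e]
      exact (hG0s (i + 1)).sub ((ha1 i).mul (hb i))
    have hα' : ∀ k, k ≤ n → Smooth (T (α k) - a * α k) := by
      intro k hk i
      have e : (T (α k) - a * α k) i = fun x => α k (i + 1) x - a i x * α k i x := rfl
      rw [e]
      exact (hα k (hk.trans (Nat.le_succ n)) (i + 1)).sub
        ((ha i).mul (hα k (hk.trans (Nat.le_succ n)) i))
    have hS' := step_hS a b c n α ha hα hS hG0 h1
    have hG' : ∀ k, k ≤ n →
        NowhereZero (Gi (ai a b c 1) (T b) (T (Gi a b c 0) - ai a b c 1 * b) k) := by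
      intro k hk
      rw [(Ginv a b c k).2]
      exact hG (k + 1) (Nat.succ_le_succ hk)
    have hzn := (IH (ai a b c 1) (T b) (T (Gi a b c 0) - ai a b c 1 * b)
      (fun k => T (α k) - a * α k) ha1 hb' hc' hα' hS').2 hG'
    refine final a b c (α (n + 1)) ha (hα _ le_rfl) h1 (fun i x => ?_) hG0
    have h2 := coeff2 a b c (n + 1) α hα hS i x
    have hzero : α n (i + 1) x - a i x * α n i x = 0 := by
      have h3 := congrFun (congrFun hzn i) x
      simpa only [T, Pi.sub_apply, Pi.mul_apply, Pi.zero_apply] using h3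
    have hsum : (∑ k ∈ Finset.range (n + 1 + 1),
        (α k (i + 1) x - a i x * α k i x) * (if k + 1 = n + 1 then (1:ℝ) else 0))
        = α n (i + 1) x - a i x * α n i x := by
      have hcg : ∀ k ∈ Finset.range (n + 1 + 1),
          (α k (i + 1) x - a i x * α k i x) * (if k + 1 = n + 1 then (1:ℝ) else 0)
          = if k = n then α k (i + 1) x - a i x * α k i x else 0 := by
        intro k _
        rcases eq_or_ne k n with h | h
        · subst h; simp
        · simp [h, fun hh : k + 1 = n + 1 => h (Nat.succ_injective hh)]
      rw [Finset.sum_congr rfl hcg, Finset.sum_ite_eq' (Finset.range (n + 1 + 1)) n,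
        if_pos (Finset.mem_range.mpr (by omega))]
    rw [hsum, hzero, add_zero] at h2
    exact h2

end Main

/-- Let `σ ≥ 0` and `α_0, …, α_σ ∈ 𝔉` be such that
`S(g)(i,x) = Σ_{k=0}^σ α_k(i,x)·g⁽ᵏ⁾(x)` satisfies `L(S(g)) = 0` for every smooth
`g : ℝ → ℝ`.  Then `T(α_σ) = a·α_σ`, and if moreover the Laplace i-invariants
`G_0, …, G_σ` are all nowhere zero, then `α_σ` vanishes identically. -/
theorem statement7 (a b c : SDF) (ha : Smooth a) (hb : Smooth b) (hc : Smooth c)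
    (σ : ℕ) (α : ℕ → SDF) (hα : ∀ k, k ≤ σ → Smooth (α k))
    (hS : ∀ g : ℝ → ℝ, ContDiff ℝ (⊤ : ℕ∞) g →
      L a b c (fun i x => ∑ k ∈ Finset.range (σ + 1), α k i x * iteratedDeriv k g x) = 0) :
    T (α σ) = a * α σ ∧
    ((∀ k, k ≤ σ → NowhereZero (Gi a b c k)) → α σ = 0) := by
  exact main σ a b c α ha hb hc hα hS

end SDF
end

section
/- Let n ≥ 1, and let β_0,…,β_n and γ_0,…,γ_{n-1} be elements of 𝔊 such that the operator identity (T_i − 1)∘(Σ_{k=0}^n (β_k·)∘T_j^k) = Σ_{k=0}^{n-1} (γ_k·)∘T_j^k∘L holds on 𝔊. Then T_j^{n-1}(b)·T_i(β_n) = β_n. Consequently, if b and β_n are nowhere zero, then θ := T_j^{1-n}(β_n) satisfies T_i(θ) = θ/b, i.e. θ ∈ ker(T_i − (1/b)·). -/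
/-!
Discrete (quad-graph) setting: the space `𝔊` is modelled by `QG = ℤ → ℤ → ℝ`
(functions `φ(i,j)`), with the shifts `Ti`, `Tj`, their inverses, and the
`k`-fold shifts `TiZ k`, `TjZ k`.  For `g : QG`, pointwise multiplication
`g * φ` models the operator `g·`.
-/

/-- The function space `𝔊` of functions `ℤ² → ℝ`. -/
abbrev QG : Type := ℤ → ℤ → ℝ

namespace QG

noncomputable section

/-- The shift operator `T_i(φ)(i,j) = φ(i+1,j)`. -/
def Ti (φ : QG) : QG := fun i j => φ (i + 1) j

/-- The shift operator `T_j(φ)(i,j) = φ(i,j+1)`. -/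
def Tj (φ : QG) : QG := fun i j => φ i (j + 1)

/-- The `k`-fold shift in `i`. -/
def TiZ (k : ℤ) (φ : QG) : QG := fun i j => φ (i + k) j

/-- The `k`-fold shift in `j`. -/
def TjZ (k : ℤ) (φ : QG) : QG := fun i j => φ i (j + k)

/-- The inverse shift `T_i⁻¹`. -/
def TiInv (φ : QG) : QG := fun i j => φ (i - 1) j

/-- The inverse shift `T_j⁻¹`. -/
def TjInv (φ : QG) : QG := fun i j => φ i (j - 1)

/-- A function that is nowhere zero. -/
def NowhereZero (φ : QG) : Prop := ∀ i j, φ i j ≠ 0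

/-- The linearization operator `L = T_i∘T_j − a·T_i − b·T_j − c·`. -/
def L (a b c : QG) (φ : QG) : QG := Ti (Tj φ) - a * Ti φ - b * Tj φ - c * φ

/-- The pair `(b_k, H_k)` of the Laplace j-transformations:
`b_0 = a`, `H_0 = c + b·T_i⁻¹(a)`,
`b_{k+1} = T_i⁻¹(b_k)·T_j(H_k)/H_k`,
`H_{k+1} = T_j(H_k) − T_j^k(b)·b_{k+1} + T_j^{k+1}(b)·T_i⁻¹(b_{k+1})`. -/
def bH (a b c : QG) : ℕ → QG × QG
  | 0 => (a, c + b * TiInv a)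
  | k + 1 =>
      let bk := TiInv (bH a b c k).1 * Tj (bH a b c k).2 / (bH a b c k).2
      (bk, Tj (bH a b c k).2 - TjZ (k : ℤ) b * bk + TjZ ((k : ℤ) + 1) b * TiInv bk)

/-- The function `b_k`. -/
def bj (a b c : QG) (k : ℕ) : QG := (bH a b c k).1

/-- The Laplace j-invariant `H_k`. -/
def Hj (a b c : QG) (k : ℕ) : QG := (bH a b c k).2

/-- The operator `L_k`: `L_0 = L` and
`L_k = (T_i − T_j^k(b)·)∘(T_j − T_i⁻¹(b_k)·) − H_k·` for `k ≥ 1`. -/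
def Lk (a b c : QG) : ℕ → QG → QG
  | 0, φ => L a b c φ
  | k + 1, φ =>
      Ti (Tj φ - TiInv (bj a b c (k + 1)) * φ)
        - TjZ ((k : ℤ) + 1) b * (Tj φ - TiInv (bj a b c (k + 1)) * φ)
        - Hj a b c (k + 1) * φ

/-- `Bo (k+1)` is the operator `B_k = (T_j − T_i⁻¹(b_k)·)∘B_{k-1}`; `Bo 0 = id` is `B_{-1}`. -/
def Bo (a b c : QG) : ℕ → QG → QG
  | 0, φ => φ
  | k + 1, φ => Tj (Bo a b c k φ) - TiInv (bj a b c k) * Bo a b c k φ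

/-- `Bbar k` is the operator `B̄_k`: `B̄_0 = id`, `B̄_k = (T_j − b_k·)∘B̄_{k-1}`. -/
def Bbar (a b c : QG) : ℕ → QG → QG
  | 0, φ => φ
  | k + 1, φ => Tj (Bbar a b c k φ) - bj a b c (k + 1) * Bbar a b c k φ

/-- `Rchain p` is the composition
`((1/H_0)·)∘(T_i − b·)∘((1/H_1)·)∘(T_i − T_j(b)·)∘···∘((1/H_{p-1})·)∘(T_i − T_j^{p-1}(b)·)`
(the identity for `p = 0`). -/
def Rchain (a b c : QG) : ℕ → QG → QG
  | 0, φ => φ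
  | k + 1, φ => Rchain a b c k ((1 / Hj a b c k) * (Ti φ - TjZ (k : ℤ) b * φ))

end
/-- Let `n ≥ 1` and `β_0, …, β_n, γ_0, …, γ_{n-1} ∈ 𝔊` satisfy the
formal j-integral relation `(T_i − 1)∘(Σ_{k=0}^n (β_k·)∘T_j^k) = Σ_{k=0}^{n-1} (γ_k·)∘T_j^k∘L`
on `𝔊`.  Then `T_j^{n-1}(b)·T_i(β_n) = β_n`; consequently, if `b` and `β_n` are
nowhere zero, then `θ := T_j^{1-n}(β_n)` satisfies `T_i(θ) = θ/b`. -/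
theorem statement13 (a b c : QG) (n : ℕ) (hn : 1 ≤ n) (β γ : ℕ → QG)
    (hJ : ∀ φ : QG,
      Ti (∑ k ∈ Finset.range (n + 1), β k * TjZ (k : ℤ) φ)
          - ∑ k ∈ Finset.range (n + 1), β k * TjZ (k : ℤ) φ
        = ∑ k ∈ Finset.range n, γ k * TjZ (k : ℤ) (L a b c φ)) :
    TjZ ((n : ℤ) - 1) b * Ti (β n) = β n ∧
    (NowhereZero b → NowhereZero (β n) →
      Ti (TjZ (1 - (n : ℤ)) (β n)) = TjZ (1 - (n : ℤ)) (β n) / b) := by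
  have key : ∀ i j : ℤ, b i (j + ((n : ℤ) - 1)) * β n (i + 1) j = β n i j := by
    intro i j
    -- delta function at (i+1, j+n)
    set φ1 : QG := fun p q => if p = i + 1 ∧ q = j + n then (1 : ℝ) else 0 with hφ1
    -- delta function at (i, j+n)
    set φ2 : QG := fun p q => if p = i ∧ q = j + n then (1 : ℝ) else 0 with hφ2
    have h1 := congrFun (congrFun (hJ φ1) i) j
    have h2 := congrFun (congrFun (hJ φ2) i) j
    simp only [Ti, Tj, TjZ, L, Pi.mul_apply, Pi.sub_apply, Finset.sum_apply] at h1 h2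
    -- evaluate the sums for φ1
    have e11 : ∑ k ∈ Finset.range (n + 1), β k (i + 1) j * φ1 (i + 1) (j + k)
        = β n (i + 1) j := by
      rw [Finset.sum_eq_single n]
      · have : φ1 (i + 1) (j + n) = 1 := by simp [hφ1]
        rw [this, mul_one]
      · intro k hk hkn
        have : φ1 (i + 1) (j + k) = 0 := by
          simp only [hφ1]
          rw [if_neg]
          rintro ⟨-, h⟩
          exact hkn (by exact_mod_cast add_left_cancel h)
        rw [this, mul_zero]
      · intro h; exact absurd (Finset.self_mem_range_succ n) h
    have e12 : ∑ k ∈ Finset.range (n + 1), β k i j * φ1 i (j + k) = 0 := by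
      apply Finset.sum_eq_zero
      intro k hk
      have : φ1 i (j + k) = 0 := by
        simp only [hφ1]
        rw [if_neg]
        rintro ⟨h, -⟩; omega
      rw [this, mul_zero]
    have e13 : ∑ k ∈ Finset.range n,
        γ k i j * (φ1 (i + 1) (j + k + 1) - a i (j + k) * φ1 (i + 1) (j + k)
          - b i (j + k) * φ1 i (j + k + 1) - c i (j + k) * φ1 i (j + k))
        = γ (n - 1) i j := by
      rw [Finset.sum_eq_single (n - 1)]
      · have h1' : φ1 (i + 1) (j + (n - 1 : ℕ) + 1) = 1 := by
          simp only [hφ1]; rw [if_pos]; exact ⟨by trivial, by push_cast; omega⟩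
        have h2' : φ1 (i + 1) (j + (n - 1 : ℕ)) = 0 := by
          simp only [hφ1]; rw [if_neg]; rintro ⟨-, h⟩; omega
        have h3' : φ1 i (j + (n - 1 : ℕ) + 1) = 0 := by
          simp only [hφ1]; rw [if_neg]; rintro ⟨h, -⟩; omega
        have h4' : φ1 i (j + (n - 1 : ℕ)) = 0 := by
          simp only [hφ1]; rw [if_neg]; rintro ⟨h, -⟩; omega
        rw [h1', h2', h3', h4']; ring
      · intro k hk hkn
        rw [Finset.mem_range] at hk
        have h1' : φ1 (i + 1) (j + k + 1) = 0 := by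
          simp only [hφ1]; rw [if_neg]; rintro ⟨-, h⟩; omega
        have h2' : φ1 (i + 1) (j + k) = 0 := by
          simp only [hφ1]; rw [if_neg]; rintro ⟨-, h⟩; omega
        have h3' : φ1 i (j + k + 1) = 0 := by
          simp only [hφ1]; rw [if_neg]; rintro ⟨h, -⟩; omega
        have h4' : φ1 i (j + k) = 0 := by
          simp only [hφ1]; rw [if_neg]; rintro ⟨h, -⟩; omega
        rw [h1', h2', h3', h4']; ring
      · intro h; exact absurd (Finset.mem_range.mpr (by omega)) h
    -- evaluate the sums for φ2
    have e21 : ∑ k ∈ Finset.range (n + 1), β k (i + 1) j * φ2 (i + 1) (j + k) = 0 := by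
      apply Finset.sum_eq_zero
      intro k hk
      have : φ2 (i + 1) (j + k) = 0 := by
        simp only [hφ2]; rw [if_neg]; rintro ⟨h, -⟩; omega
      rw [this, mul_zero]
    have e22 : ∑ k ∈ Finset.range (n + 1), β k i j * φ2 i (j + k) = β n i j := by
      rw [Finset.sum_eq_single n]
      · have : φ2 i (j + n) = 1 := by simp [hφ2]
        rw [this, mul_one]
      · intro k hk hkn
        have : φ2 i (j + k) = 0 := by
          simp only [hφ2]; rw [if_neg]
          rintro ⟨-, h⟩
          exact hkn (by exact_mod_cast add_left_cancel h)
        rw [this, mul_zero]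
      · intro h; exact absurd (Finset.self_mem_range_succ n) h
    have e23 : ∑ k ∈ Finset.range n,
        γ k i j * (φ2 (i + 1) (j + k + 1) - a i (j + k) * φ2 (i + 1) (j + k)
          - b i (j + k) * φ2 i (j + k + 1) - c i (j + k) * φ2 i (j + k))
        = -(γ (n - 1) i j * b i (j + (n - 1 : ℕ))) := by
      rw [Finset.sum_eq_single (n - 1)]
      · have h1' : φ2 (i + 1) (j + (n - 1 : ℕ) + 1) = 0 := by
          simp only [hφ2]; rw [if_neg]; rintro ⟨h, -⟩; omega
        have h2' : φ2 (i + 1) (j + (n - 1 : ℕ)) = 0 := by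
          simp only [hφ2]; rw [if_neg]; rintro ⟨h, -⟩; omega
        have h3' : φ2 i (j + (n - 1 : ℕ) + 1) = 1 := by
          simp only [hφ2]; rw [if_pos]; exact ⟨by trivial, by push_cast; omega⟩
        have h4' : φ2 i (j + (n - 1 : ℕ)) = 0 := by
          simp only [hφ2]; rw [if_neg]; rintro ⟨-, h⟩; omega
        rw [h1', h2', h3', h4']; ring
      · intro k hk hkn
        rw [Finset.mem_range] at hk
        have h1' : φ2 (i + 1) (j + k + 1) = 0 := by
          simp only [hφ2]; rw [if_neg]; rintro ⟨h, -⟩; omega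
        have h2' : φ2 (i + 1) (j + k) = 0 := by
          simp only [hφ2]; rw [if_neg]; rintro ⟨h, -⟩; omega
        have h3' : φ2 i (j + k + 1) = 0 := by
          simp only [hφ2]; rw [if_neg]; rintro ⟨-, h⟩; omega
        have h4' : φ2 i (j + k) = 0 := by
          simp only [hφ2]; rw [if_neg]; rintro ⟨-, h⟩; omega
        rw [h1', h2', h3', h4']; ring
      · intro h; exact absurd (Finset.mem_range.mpr (by omega)) h
    rw [e11, e12, e13] at h1
    rw [e21, e22, e23] at h2
    -- h1 : β n (i+1) j - 0 = γ (n-1) i j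
    -- h2 : 0 - β n i j = -(γ (n-1) i j * b i (j + (n-1)))
    have hcast : ((n - 1 : ℕ) : ℤ) = (n : ℤ) - 1 := by omega
    have := h2
    rw [hcast] at this
    have hg : γ (n - 1) i j = β n (i + 1) j := by linarith [h1]
    rw [hg] at this
    linarith [this]
  constructor
  · funext i j
    show b i (j + ((n:ℤ) - 1)) * β n (i + 1) j = β n i j
    exact key i j
  · intro hb _
    funext i j
    have hk := key i (j + (1 - (n : ℤ)))
    show β n (i+1) (j + (1 - (n:ℤ))) = β n i (j + (1 - (n:ℤ))) / b i j
    have harg : j + (1 - (n : ℤ)) + ((n : ℤ) - 1) = j := by ring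
    rw [harg] at hk
    rw [eq_div_iff (hb i j), mul_comm]
    exact hk

end QG
end
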